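/- Let v₁, v₂ : [0, ∞) → ℝ² be functions with |v₁(t)| ≤ ρ/2 and |v₂(t)| ≤ ρ/2 for all t ≥ 0, and let x₁, x₂ : [0, ∞) → ℝ² be differentiable curves satisfying, for all t ≥ 0, x₁'(t) = sat_ρ(x₂(t) − x₁(t)) + g(x₁(t)) + v₁(t) and x₂'(t) = g(x₂(t)) + v₂(t). If |x₁(0) − x₂(0)| ≤ ρ, then |x₁(t) − x₂(t)| ≤ ρ for all t ≥ 0. -/

import Mathlib

open Set
open scoped RealInnerProductSpace

/-- The repulsive vector field from the boundary of the disk of radius `R`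
(Section 7 of the paper). -/
noncomputable def gfield (ρ R : ℝ) (x : EuclideanSpace ℝ (Fin 2)) :
    EuclideanSpace ℝ (Fin 2) :=
  if ‖x‖ < R - ρ / 2 then 0
  else if ‖x‖ < R then ((R - ρ / 2) - ‖x‖) • (‖x‖⁻¹ • x)
  else -(ρ / 2) • (‖x‖⁻¹ • x)

/-- The saturation function sat_ρ (Section 7 of the paper). -/
noncomputable def satρ (ρ : ℝ) (x : EuclideanSpace ℝ (Fin 2)) :
    EuclideanSpace ℝ (Fin 2) :=
  if ‖x‖ ≤ ρ then x else ρ • (‖x‖⁻¹ • x)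

/-- The scalar radial profile of `gfield`. -/
noncomputable def hfun (ρ R : ℝ) (r : ℝ) : ℝ :=
  min 0 (max (-(ρ / 2)) ((R - ρ / 2) - r))

lemma gfield_eq (ρ R : ℝ) (hρ : 0 ≤ ρ) (x : EuclideanSpace ℝ (Fin 2)) :
    gfield ρ R x = hfun ρ R ‖x‖ • (‖x‖⁻¹ • x) := by
  unfold gfield hfun
  split_ifs with h1 h2
  · rw [min_eq_left (le_max_of_le_right (by linarith : (0:ℝ) ≤ (R - ρ / 2) - ‖x‖)), zero_smul]
  · rw [max_eq_right (by linarith : -(ρ / 2) ≤ (R - ρ / 2) - ‖x‖),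
      min_eq_right (by linarith : (R - ρ / 2) - ‖x‖ ≤ 0)]
  · rw [max_eq_left (by linarith : (R - ρ / 2) - ‖x‖ ≤ -(ρ / 2)),
      min_eq_right (by linarith : -(ρ / 2) ≤ (0:ℝ))]

lemma hfun_nonpos (ρ R : ℝ) (r : ℝ) : hfun ρ R r ≤ 0 := min_le_left _ _

lemma hfun_antitone (ρ R : ℝ) {r s : ℝ} (h : r ≤ s) : hfun ρ R s ≤ hfun ρ R r :=
  min_le_min le_rfl (max_le_max le_rfl (by linarith))

lemma inv_norm_inner_le (a b : EuclideanSpace ℝ (Fin 2)) :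
    ‖b‖⁻¹ * ⟪a, b⟫ ≤ ‖a‖ := by
  rcases eq_or_ne (‖b‖) 0 with h | h
  · simp [h, norm_nonneg]
  · have hb : 0 < ‖b‖ := lt_of_le_of_ne (norm_nonneg _) (Ne.symm h)
    have := real_inner_le_norm a b
    rw [inv_mul_le_iff₀ hb]
    nlinarith

lemma g_mono (ρ R : ℝ) (hρ : 0 ≤ ρ) (a b : EuclideanSpace ℝ (Fin 2)) :
    ⟪a - b, gfield ρ R a - gfield ρ R b⟫ ≤ 0 := by
  rw [gfield_eq ρ R hρ a, gfield_eq ρ R hρ b]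
  set ha := hfun ρ R ‖a‖ with hha
  set hb := hfun ρ R ‖b‖ with hhb
  have h1 : ha ≤ 0 := hfun_nonpos ρ R _
  have h2 : hb ≤ 0 := hfun_nonpos ρ R _
  have expand : ⟪a - b, (ha • (‖a‖⁻¹ • a)) - (hb • (‖b‖⁻¹ • b))⟫
      = ha * (‖a‖⁻¹ * ⟪a, a⟫) - hb * (‖b‖⁻¹ * ⟪a, b⟫)
        - ha * (‖a‖⁻¹ * ⟪b, a⟫) + hb * (‖b‖⁻¹ * ⟪b, b⟫) := by
    simp [inner_sub_left, inner_sub_right, real_inner_smul_right]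
    ring
  have ca : ‖a‖⁻¹ * ⟪a, a⟫ = ‖a‖ := by
    rcases eq_or_ne (‖a‖) 0 with h | h
    · simp [h]
    · rw [real_inner_self_eq_norm_sq]; field_simp
  have cb : ‖b‖⁻¹ * ⟪b, b⟫ = ‖b‖ := by
    rcases eq_or_ne (‖b‖) 0 with h | h
    · simp [h]
    · rw [real_inner_self_eq_norm_sq]; field_simp
  have cab : ‖b‖⁻¹ * ⟪a, b⟫ ≤ ‖a‖ := inv_norm_inner_le a b
  have cba : ‖a‖⁻¹ * ⟪b, a⟫ ≤ ‖b‖ := inv_norm_inner_le b a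
  have anti : (ha - hb) * (‖a‖ - ‖b‖) ≤ 0 := by
    rcases le_total (‖a‖) (‖b‖) with h | h
    · have := hfun_antitone ρ R (s := ‖b‖) (r := ‖a‖) h
      rw [← hha, ← hhb] at this
      nlinarith
    · have := hfun_antitone ρ R (s := ‖a‖) (r := ‖b‖) h
      rw [← hha, ← hhb] at this
      nlinarith
  rw [expand, ca, cb]
  nlinarith [mul_le_mul_of_nonpos_left cab h2, mul_le_mul_of_nonpos_left cba h1]

lemma sat_inner (ρ : ℝ) (hρ : 0 ≤ ρ) (w : EuclideanSpace ℝ (Fin 2)) (hw : ρ < ‖w‖) :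
    ⟪w, satρ ρ (-w)⟫ = -(ρ * ‖w‖) := by
  have hw0 : (0:ℝ) < ‖w‖ := lt_of_le_of_lt hρ hw
  unfold satρ
  rw [if_neg (by rw [norm_neg]; exact not_le.mpr hw)]
  rw [norm_neg, real_inner_smul_right, real_inner_smul_right, inner_neg_right,
    real_inner_self_eq_norm_sq]
  field_simp

theorem stmt_17 (ρ R : ℝ) (hρ : 0 < ρ) (hρR : ρ ≤ R)
    (v₁ v₂ : ℝ → EuclideanSpace ℝ (Fin 2))
    (hv₁ : ∀ t, 0 ≤ t → ‖v₁ t‖ ≤ ρ / 2) (hv₂ : ∀ t, 0 ≤ t → ‖v₂ t‖ ≤ ρ / 2)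
    (x₁ x₂ : ℝ → EuclideanSpace ℝ (Fin 2))
    (hx₁ : ∀ t, 0 ≤ t → HasDerivWithinAt x₁
      (satρ ρ (x₂ t - x₁ t) + gfield ρ R (x₁ t) + v₁ t) (Set.Ici (0:ℝ)) t)
    (hx₂ : ∀ t, 0 ≤ t → HasDerivWithinAt x₂
      (gfield ρ R (x₂ t) + v₂ t) (Set.Ici (0:ℝ)) t)
    (hinit : ‖x₁ 0 - x₂ 0‖ ≤ ρ) :
    ∀ t, 0 ≤ t → ‖x₁ t - x₂ t‖ ≤ ρ := by
  set y : ℝ → EuclideanSpace ℝ (Fin 2) := fun t => x₁ t - x₂ t with hy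
  set D : ℝ → EuclideanSpace ℝ (Fin 2) := fun t =>
    satρ ρ (x₂ t - x₁ t) + gfield ρ R (x₁ t) + v₁ t - (gfield ρ R (x₂ t) + v₂ t) with hD
  have hyderiv : ∀ t, 0 ≤ t → HasDerivWithinAt y (D t) (Set.Ici (0:ℝ)) t :=
    fun t ht => (hx₁ t ht).sub (hx₂ t ht)
  set f : ℝ → ℝ := fun t => ⟪y t, y t⟫ with hf
  have hfderiv : ∀ t, 0 ≤ t →
      HasDerivWithinAt f (2 * ⟪y t, D t⟫) (Set.Ici (0:ℝ)) t := by
    intro t ht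
    have := (hyderiv t ht).inner ℝ (hyderiv t ht)
    refine this.congr_deriv ?_
    rw [real_inner_comm (D t) (y t)]
    ring
  have key : ∀ T, 0 ≤ T → f T ≤ ρ ^ 2 := by
    intro T hT
    have step : ∀ ε > (0:ℝ), f T ≤ ρ ^ 2 + ε * (1 + T) := by
      intro ε hε
      have hcont : ContinuousOn f (Icc (0:ℝ) T) := by
        intro x hx
        exact ((hfderiv x hx.1).continuousWithinAt).mono
          (fun z hz => hz.1 : Icc (0:ℝ) T ⊆ Ici 0)
      have hder : ∀ x ∈ Ico (0:ℝ) T,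
          HasDerivWithinAt f (2 * ⟪y x, D x⟫) (Ici x) x := by
        intro x hx
        exact (hfderiv x hx.1).mono (Ici_subset_Ici.mpr hx.1)
      have hinit0 : f 0 ≤ ρ ^ 2 + ε * (1 + 0) := by
        have : f 0 = ‖y 0‖ ^ 2 := real_inner_self_eq_norm_sq _
        rw [this]
        nlinarith [norm_nonneg (y 0)]
      have hBder : ∀ x : ℝ, HasDerivAt (fun x => ρ ^ 2 + ε * (1 + x)) ε x := by
        intro x
        simpa using ((hasDerivAt_id x).const_add (1:ℝ)).const_mul ε |>.const_add (ρ^2)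
      have hbound : ∀ x ∈ Ico (0:ℝ) T, f x = ρ ^ 2 + ε * (1 + x) →
          2 * ⟪y x, D x⟫ < ε := by
        intro x hx hfx
        have hpos : ρ ^ 2 < f x := by nlinarith [hx.1]
        have hn : ρ < ‖y x‖ := by
          have : f x = ‖y x‖ ^ 2 := real_inner_self_eq_norm_sq _
          nlinarith [norm_nonneg (y x)]
        -- decompose the inner product
        have hsplit : ⟪y x, D x⟫ = ⟪y x, satρ ρ (x₂ x - x₁ x)⟫
            + ⟪y x, gfield ρ R (x₁ x) - gfield ρ R (x₂ x)⟫
            + ⟪y x, v₁ x - v₂ x⟫ := by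
          rw [hD]
          simp only [inner_add_right, inner_sub_right]
          ring
        have hsat : ⟪y x, satρ ρ (x₂ x - x₁ x)⟫ = -(ρ * ‖y x‖) := by
          have : x₂ x - x₁ x = -(y x) := by rw [hy]; exact (neg_sub _ _).symm
          rw [this]
          exact sat_inner ρ hρ.le (y x) hn
        have hg : ⟪y x, gfield ρ R (x₁ x) - gfield ρ R (x₂ x)⟫ ≤ 0 :=
          g_mono ρ R hρ.le (x₁ x) (x₂ x)
        have hv : ⟪y x, v₁ x - v₂ x⟫ ≤ ρ * ‖y x‖ := by
          have h1 := real_inner_le_norm (y x) (v₁ x - v₂ x)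
          have h2 : ‖v₁ x - v₂ x‖ ≤ ρ :=
            (norm_sub_le _ _).trans (by linarith [hv₁ x hx.1, hv₂ x hx.1])
          nlinarith [norm_nonneg (y x)]
        have : 2 * ⟪y x, D x⟫ ≤ 0 := by
          rw [hsplit, hsat]; linarith
        linarith
      exact image_le_of_deriv_right_lt_deriv_boundary hcont hder hinit0 hBder hbound
        ⟨hT, le_rfl⟩
    refine le_of_forall_pos_le_add fun δ hδ => ?_
    have h1T : (0:ℝ) < 1 + T := by linarith
    have hstep := step (δ / (1 + T)) (by positivity)
    have heq : δ / (1 + T) * (1 + T) = δ := by field_simp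
    linarith
  intro t ht
  have := key t ht
  have hfnorm : f t = ‖y t‖ ^ 2 := real_inner_self_eq_norm_sq _
  rw [hfnorm] at this
  nlinarith [norm_nonneg (y t)]
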